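/- Let G be a group and f : H → G a simple virtual endomorphism of degree p (H has index p in G, and no nontrivial subgroup of H normal in G is f-invariant). Then for any n, every element of H satisfies h^{p^n} = 1 if and only if every element of f(H) satisfies g^{p^n} = 1. -/

import Mathlib

/-!
Since `G` is a finite `p`-group, the subgroup `H` of index `p` is normal. Hence the subgroup `K`
generated by the `p^n`-th powers of elements of `H` is normal in `G` (conjugation permutes these
powers) and contained in `H`. If `f(H)` has exponent dividing `p^n`, then `f` kills every
generator of `K`, so `K` is `f`-invariant, and simplicity forces `K = 1`.
-/

theorem IsPGroup.normal_of_index_eq {p : ℕ} (hp : p.Prime) {G : Type*} [Group G] [Finite G]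
    (hG : IsPGroup p G) {H : Subgroup G} (hidx : H.index = p) : H.Normal := by
  have : Fact p.Prime := ⟨hp⟩
  obtain ⟨k, hk⟩ := IsPGroup.iff_card.mp hG
  have hk0 : k ≠ 0 := by
    rintro rfl
    have := H.index_dvd_card
    rw [hk, hidx, pow_zero, Nat.dvd_one] at this
    exact hp.ne_one this
  exact H.normal_of_index_eq_minFac_card (by rw [hk, hp.pow_minFac hk0, hidx])

namespace Subgroup

variable {G : Type*} [Group G]

theorem conjugatesOfSet_image_pow_subset (H : Subgroup G) [H.Normal] (m : ℕ) :
    Group.conjugatesOfSet ((· ^ m) '' (H : Set G)) ⊆ (· ^ m) '' (H : Set G) := by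
  intro y hy
  obtain ⟨_, ⟨x, hx, rfl⟩, hconj⟩ := Group.mem_conjugatesOfSet_iff.mp hy
  obtain ⟨c, rfl⟩ := isConj_iff.mp hconj
  exact ⟨c * x * c⁻¹, Normal.conj_mem ‹_› x hx c, by simp [conj_pow]⟩

theorem normalClosure_image_pow_le_map_ker (H : Subgroup G) [H.Normal] {M : Type*} [Monoid M]
    (f : H →* M) (m : ℕ) (hf : ∀ h : H, f h ^ m = 1) :
    normalClosure ((· ^ m) '' (H : Set G)) ≤ f.ker.map H.subtype := by
  refine (closure_le _).mpr ((H.conjugatesOfSet_image_pow_subset m).trans ?_)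
  rintro _ ⟨x, hx, rfl⟩
  exact ⟨⟨x, hx⟩ ^ m, by rw [SetLike.mem_coe, MonoidHom.mem_ker, map_pow, hf], rfl⟩

theorem pow_eq_one_of_forall_range_pow_eq_one (H : Subgroup G) [H.Normal] (f : H →* G)
    (hsimple : ∀ K : Subgroup G, K ≤ H → K.Normal →
      (∀ k (hk : k ∈ H), k ∈ K → f ⟨k, hk⟩ ∈ K) → K = ⊥)
    (m : ℕ) (hf : ∀ g ∈ f.range, g ^ m = 1) (h : H) : (h : G) ^ m = 1 := by
  set K := normalClosure ((· ^ m) '' (H : Set G))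
  have hKH : K ≤ H := normalClosure_le_normal (by rintro _ ⟨x, hx, rfl⟩; exact H.pow_mem hx m)
  have hKker := H.normalClosure_image_pow_le_map_ker f m fun h ↦ hf _ ⟨h, rfl⟩
  have hKinv : ∀ k (hk : k ∈ H), k ∈ K → f ⟨k, hk⟩ ∈ K := by
    intro k hk hkK
    obtain ⟨x, hx, rfl⟩ := hKker hkK
    show f x ∈ K
    rw [MonoidHom.mem_ker.mp hx]
    exact K.one_mem
  have hmem : (h : G) ^ m ∈ K := subset_normalClosure ⟨h, h.2, rfl⟩
  rwa [hsimple K hKH inferInstance hKinv, mem_bot] at hmem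

end Subgroup

/-- Theorem 2.6: if `f : H → G` is a simple virtual endomorphism
of degree `p` of a finite `p`-group `G`, then `H^{p^n} = 1` if and only if
`f(H)^{p^n} = 1`. -/
theorem stmt3 (p : ℕ) (hp : p.Prime) (G : Type*) [Group G] [Finite G]
    (hG : IsPGroup p G) (H : Subgroup G) (hidx : H.index = p) (f : H →* G)
    (hsimple : ∀ K : Subgroup G, K ≤ H → K.Normal →
      (∀ k (hk : k ∈ H), k ∈ K → f ⟨k, hk⟩ ∈ K) → K = ⊥)
    (n : ℕ) :
    (∀ h : H, (h : G) ^ p ^ n = 1) ↔ (∀ g ∈ f.range, g ^ p ^ n = 1) := by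
  have : H.Normal := hG.normal_of_index_eq hp hidx
  constructor
  · rintro hH _ ⟨h, rfl⟩
    rw [← map_pow, show h ^ p ^ n = 1 from Subtype.ext (hH h), map_one]
  · exact H.pow_eq_one_of_forall_range_pow_eq_one f hsimple (p ^ n)
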